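/- Let A, B, C, D be jointly distributed random variables on a finite probability space. If I(A:B|C) = 0 and I(B:D|C) = 0, then I(C:D) ≤ I(C:D|A) + I(C:D|B) + I(A:B). -/

import Mathlib

open scoped BigOperators Classical

noncomputable section

/-- `p` is a probability mass function on the finite type `Ω`. -/
def IsPMF {Ω : Type*} [Fintype Ω] (p : Ω → ℝ) : Prop :=
  (∀ ω, 0 ≤ p ω) ∧ ∑ ω, p ω = 1

/-- Probability of the event `X = s` under `p`. -/
def prOf {Ω S : Type*} [Fintype Ω] [DecidableEq S] (p : Ω → ℝ) (X : Ω → S) (s : S) : ℝ :=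
  ∑ ω ∈ Finset.univ.filter (fun ω => X ω = s), p ω

/-- Shannon entropy (in bits) of the random variable `X` under the pmf `p`. -/
def ent {Ω S : Type*} [Fintype Ω] [Fintype S] [DecidableEq S] (p : Ω → ℝ) (X : Ω → S) : ℝ :=
  - ∑ s : S, prOf p X s * Real.logb 2 (prOf p X s)

/-- Mutual information `I(X:Y) = H(X) + H(Y) - H(X,Y)`. -/
def mi {Ω S T : Type*} [Fintype Ω] [Fintype S] [Fintype T] [DecidableEq S] [DecidableEq T]
    (p : Ω → ℝ) (X : Ω → S) (Y : Ω → T) : ℝ :=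
  ent p X + ent p Y - ent p (fun ω => (X ω, Y ω))

/-- Conditional mutual information `I(X:Y|Z) = H(X,Z) + H(Y,Z) - H(X,Y,Z) - H(Z)`. -/
def cmi {Ω S T U : Type*} [Fintype Ω] [Fintype S] [Fintype T] [Fintype U]
    [DecidableEq S] [DecidableEq T] [DecidableEq U]
    (p : Ω → ℝ) (X : Ω → S) (Y : Ω → T) (Z : Ω → U) : ℝ :=
  ent p (fun ω => (X ω, Z ω)) + ent p (fun ω => (Y ω, Z ω))
    - ent p (fun ω => (X ω, Y ω, Z ω)) - ent p Z

/-- Conditional entropy `H(X|Y) = H(X,Y) - H(Y)`. -/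
def condEnt {Ω S T : Type*} [Fintype Ω] [Fintype S] [Fintype T] [DecidableEq S] [DecidableEq T]
    (p : Ω → ℝ) (X : Ω → S) (Y : Ω → T) : ℝ :=
  ent p (fun ω => (X ω, Y ω)) - ent p Y

/-- The four coordinate random variables on `Bool × Bool × Bool × Bool`. -/
def vA : Bool × Bool × Bool × Bool → Bool := fun ω => ω.1
def vB : Bool × Bool × Bool × Bool → Bool := fun ω => ω.2.1
def vC : Bool × Bool × Bool × Bool → Bool := fun ω => ω.2.2.1
def vD : Bool × Bool × Bool × Bool → Bool := fun ω => ω.2.2.2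

/-!
Replace `B` by a copy `B'` drawn from the conditional law of `B` given `C` and otherwise
independent of everything (`condCopy`). Since `A ⊥ B | C` and `B ⊥ D | C`, the triples
`(A, B', C)` and `(D, B', C)` have the laws of `(A, B, C)` and `(D, B, C)`, so none of the four
terms of the inequality changes. In the new distribution `B'` is independent of `D` given `C` and
also given `(C, A)`, and the inequality follows from the Shannon identity
`I(C:D|A) + I(C:D|B) + I(A:B) + I(D:B|C,A) = I(C:D) + I(A:B|D) + I(C:D|A,B) + I(D:B|C)`
and the nonnegativity of conditional mutual information.
-/
open Finset Real InformationTheory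

section Law

variable {Ω Ω' S T : Type*} [Fintype Ω] [Fintype Ω'] [DecidableEq S] [DecidableEq T]

theorem prOf_eq_sum_ite (p : Ω → ℝ) (X : Ω → S) (s : S) :
    prOf p X s = ∑ ω, if X ω = s then p ω else 0 :=
  sum_filter _ _

theorem prOf_nonneg {p : Ω → ℝ} (hp : ∀ ω, 0 ≤ p ω) (X : Ω → S) (s : S) : 0 ≤ prOf p X s :=
  sum_nonneg fun ω _ => hp ω

theorem prOf_congr (p : Ω → ℝ) {X : Ω → S} {Y : Ω → T} {s : S} {t : T}
    (h : ∀ ω, X ω = s ↔ Y ω = t) : prOf p X s = prOf p Y t := by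
  simp only [prOf_eq_sum_ite, h]

theorem prOf_mono {p : Ω → ℝ} (hp : ∀ ω, 0 ≤ p ω) {X : Ω → S} {Y : Ω → T} {s : S} {t : T}
    (h : ∀ ω, X ω = s → Y ω = t) : prOf p X s ≤ prOf p Y t :=
  sum_le_sum_of_subset_of_nonneg (fun ω => by simpa using h ω) fun ω _ _ => hp ω

theorem prOf_le_prOf_comp {p : Ω → ℝ} (hp : ∀ ω, 0 ≤ p ω) (X : Ω → S) (g : S → T) (s : S) :
    prOf p X s ≤ prOf p (fun ω => g (X ω)) (g s) :=
  prOf_mono hp fun ω h => by rw [h]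

theorem prOf_eq_zero_of_imp {p : Ω → ℝ} (hp : ∀ ω, 0 ≤ p ω) {X : Ω → S} {Y : Ω → T} {s : S}
    {t : T} (h : ∀ ω, X ω = s → Y ω = t) (h0 : prOf p Y t = 0) : prOf p X s = 0 :=
  le_antisymm (h0 ▸ prOf_mono hp h) (prOf_nonneg hp X s)

theorem le_prOf_apply {p : Ω → ℝ} (hp : ∀ ω, 0 ≤ p ω) (X : Ω → S) (ω : Ω) :
    p ω ≤ prOf p X (X ω) :=
  single_le_sum (fun ω _ => hp ω) (by simp)

theorem exists_eq_of_prOf_ne_zero {p : Ω → ℝ} {X : Ω → S} {s : S} (h : prOf p X s ≠ 0) :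
    ∃ ω, X ω = s := by
  by_contra! hne
  exact h (sum_eq_zero fun ω hω => absurd (mem_filter.1 hω).2 (hne ω))

theorem sum_prOf [Fintype S] (p : Ω → ℝ) (X : Ω → S) : ∑ s, prOf p X s = ∑ ω, p ω := by
  simp only [prOf_eq_sum_ite]
  rw [sum_comm]
  simp

theorem prOf_comp [Fintype S] (p : Ω → ℝ) (X : Ω → S) (g : S → T) (t : T) :
    prOf p (fun ω => g (X ω)) t = ∑ s, if g s = t then prOf p X s else 0 := by
  simp only [prOf_eq_sum_ite, ite_sum_zero]
  rw [sum_comm]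
  refine sum_congr rfl fun ω _ => ?_
  rw [sum_eq_single (X ω) (fun s _ hs => by simp [Ne.symm hs]) (by simp)]
  simp

theorem sum_prOf_fst [Fintype S] (p : Ω → ℝ) (X : Ω → S) (Y : Ω → T) (t : T) :
    ∑ s, prOf p (fun ω => (X ω, Y ω)) (s, t) = prOf p Y t := by
  simp only [prOf_eq_sum_ite]
  rw [sum_comm]
  simp [Prod.ext_iff, ite_and]

theorem prOf_comp_congr [Fintype S] {p : Ω → ℝ} {q : Ω' → ℝ} {X : Ω → S} {Y : Ω' → S}
    (h : prOf p X = prOf q Y) (g : S → T) :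
    prOf p (fun ω => g (X ω)) = prOf q (fun ω => g (Y ω)) := by
  ext t
  rw [prOf_comp, prOf_comp, h]

end Law

section Entropy

variable {Ω Ω' S T U : Type*} [Fintype Ω] [Fintype Ω'] [Fintype S] [Fintype T] [Fintype U]
  [DecidableEq S] [DecidableEq T] [DecidableEq U]

theorem ent_comp (p : Ω → ℝ) (X : Ω → S) (g : S → T) :
    ent p (fun ω => g (X ω)) = -∑ s, prOf p X s * logb 2 (prOf p (fun ω => g (X ω)) (g s)) := by
  rw [ent, neg_inj]
  simp only [prOf_comp p X g, sum_mul, ite_mul, zero_mul]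
  rw [sum_comm]
  refine sum_congr rfl fun s _ => ?_
  simp

theorem ent_eq_ent_comp (p : Ω → ℝ) (X : Ω → S) (g : S → T) (f : T → S)
    (hfg : ∀ ω, f (g (X ω)) = X ω := by intro; rfl) : ent p X = ent p (fun ω => g (X ω)) := by
  rw [ent_comp p X g, ent, neg_inj]
  refine sum_congr rfl fun s _ => ?_
  by_cases h : prOf p X s = 0
  · simp [h]
  obtain ⟨ω, rfl⟩ := exists_eq_of_prOf_ne_zero h
  congr 2
  exact prOf_congr p fun ω' => ⟨fun h' => by rw [h'], fun h' => by rw [← hfg ω', h', hfg]⟩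

theorem ent_eq_of_prOf_eq {p : Ω → ℝ} {q : Ω' → ℝ} {X : Ω → S} {Y : Ω' → S}
    (h : prOf p X = prOf q Y) : ent p X = ent q Y := by
  rw [ent, ent, h]

theorem mi_eq_of_prOf_eq {p : Ω → ℝ} {q : Ω' → ℝ} {X : Ω → S} {Y : Ω → T} {X' : Ω' → S}
    {Y' : Ω' → T} (h : prOf p (fun ω => (X ω, Y ω)) = prOf q (fun ω => (X' ω, Y' ω))) :
    mi p X Y = mi q X' Y' := by
  have hX : ent p X = ent q X' := ent_eq_of_prOf_eq (prOf_comp_congr h Prod.fst)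
  have hY : ent p Y = ent q Y' := ent_eq_of_prOf_eq (prOf_comp_congr h Prod.snd)
  rw [mi, mi, hX, hY, ent_eq_of_prOf_eq h]

theorem cmi_eq_of_prOf_eq {p : Ω → ℝ} {q : Ω' → ℝ} {X : Ω → S} {Y : Ω → T} {Z : Ω → U}
    {X' : Ω' → S} {Y' : Ω' → T} {Z' : Ω' → U}
    (h : prOf p (fun ω => (X ω, Y ω, Z ω)) = prOf q (fun ω => (X' ω, Y' ω, Z' ω))) :
    cmi p X Y Z = cmi q X' Y' Z' := by
  have hXZ : ent p (fun ω => (X ω, Z ω)) = ent q (fun ω => (X' ω, Z' ω)) :=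
    ent_eq_of_prOf_eq (prOf_comp_congr h fun v => (v.1, v.2.2))
  have hYZ : ent p (fun ω => (Y ω, Z ω)) = ent q (fun ω => (Y' ω, Z' ω)) :=
    ent_eq_of_prOf_eq (prOf_comp_congr h Prod.snd)
  have hZ : ent p Z = ent q Z' := ent_eq_of_prOf_eq (prOf_comp_congr h fun v => v.2.2)
  rw [cmi, cmi, hXZ, hYZ, hZ, ent_eq_of_prOf_eq h]

theorem ent_prod_comm (p : Ω → ℝ) (X : Ω → S) (Y : Ω → T) :
    ent p (fun ω => (X ω, Y ω)) = ent p (fun ω => (Y ω, X ω)) :=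
  ent_eq_ent_comp p _ Prod.swap Prod.swap

theorem cmi_comm (p : Ω → ℝ) (X : Ω → S) (Y : Ω → T) (Z : Ω → U) :
    cmi p X Y Z = cmi p Y X Z := by
  have hXYZ : ent p (fun ω => (X ω, Y ω, Z ω)) = ent p (fun ω => (Y ω, X ω, Z ω)) :=
    ent_eq_ent_comp p _ (fun v : S × T × U => (v.2.1, v.1, v.2.2)) fun v => (v.2.1, v.1, v.2.2)
  rw [cmi, cmi, hXYZ]
  ring

end Entropy

theorem mul_log_div_eq_mul_klFun_add_sub {a r : ℝ} (h : r = 0 → a = 0) :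
    a * log (a / r) = r * klFun (a / r) + (a - r) := by
  rcases eq_or_ne r 0 with rfl | hr
  · simp [h rfl]
  · rw [klFun]
    field_simp
    ring

theorem mul_klFun_div_eq_zero_iff {a r : ℝ} (ha : 0 ≤ a) (hr : 0 ≤ r) (h : r = 0 → a = 0) :
    r * klFun (a / r) = 0 ↔ a = r := by
  rcases eq_or_ne r 0 with rfl | hr'
  · simp [h rfl]
  · rw [mul_eq_zero, klFun_eq_zero_iff (div_nonneg ha hr), div_eq_one_iff_eq hr']
    simp [hr']

section CondIndep

variable {Ω S T U : Type*} [Fintype Ω] [DecidableEq S] [DecidableEq T] [DecidableEq U]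

def condIndepMass (p : Ω → ℝ) (X : Ω → S) (Y : Ω → T) (Z : Ω → U) (v : S × T × U) : ℝ :=
  prOf p (fun ω => (X ω, Z ω)) (v.1, v.2.2) * prOf p (fun ω => (Y ω, Z ω)) v.2 / prOf p Z v.2.2

variable (p : Ω → ℝ) (X : Ω → S) (Y : Ω → T) (Z : Ω → U)

theorem sum_prOf_mid [Fintype T] (s : S) (u : U) :
    ∑ t, prOf p (fun ω => (X ω, Y ω, Z ω)) (s, t, u) = prOf p (fun ω => (X ω, Z ω)) (s, u) := by
  simp only [prOf_eq_sum_ite]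
  rw [sum_comm]
  simp [Prod.ext_iff, ite_and]

theorem sum_condIndepMass [Fintype S] [Fintype T] [Fintype U] :
    ∑ v, condIndepMass p X Y Z v = ∑ v, prOf p (fun ω => (X ω, Y ω, Z ω)) v := by
  have hfiber (u : U) :
      ∑ s, ∑ t, condIndepMass p X Y Z (s, t, u) = prOf p Z u := by
    simp only [condIndepMass, ← sum_div, ← sum_mul, ← mul_sum, sum_prOf_fst, mul_self_div_self]
  rw [sum_prOf, ← sum_prOf p Z, Fintype.sum_prod_type_right, Fintype.sum_prod_type_right]
  exact sum_congr rfl fun u _ => sum_comm.trans (hfiber u)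

variable {p}

theorem condIndepMass_nonneg (hp : ∀ ω, 0 ≤ p ω) (v : S × T × U) : 0 ≤ condIndepMass p X Y Z v :=
  div_nonneg (mul_nonneg (prOf_nonneg hp _ _) (prOf_nonneg hp _ _)) (prOf_nonneg hp _ _)

theorem prOf_eq_zero_of_condIndepMass_eq_zero (hp : ∀ ω, 0 ≤ p ω) {v : S × T × U}
    (h : condIndepMass p X Y Z v = 0) : prOf p (fun ω => (X ω, Y ω, Z ω)) v = 0 := by
  obtain ⟨x, y, z⟩ := v
  simp only [condIndepMass, div_eq_zero_iff, mul_eq_zero] at h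
  rcases h with (h | h) | h <;> refine prOf_eq_zero_of_imp hp (fun ω hω => ?_) h <;>
    simp_all [Prod.ext_iff]

theorem cmi_eq_sum_mul_logb_div [Fintype S] [Fintype T] [Fintype U] (hp : ∀ ω, 0 ≤ p ω) :
    cmi p X Y Z = ∑ v, prOf p (fun ω => (X ω, Y ω, Z ω)) v *
      logb 2 (prOf p (fun ω => (X ω, Y ω, Z ω)) v / condIndepMass p X Y Z v) := by
  rw [cmi, ent_comp p (fun ω => (X ω, Y ω, Z ω)) fun v => (v.1, v.2.2),
    ent_comp p (fun ω => (X ω, Y ω, Z ω)) Prod.snd,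
    ent_comp p (fun ω => (X ω, Y ω, Z ω)) fun v => v.2.2, ent]
  simp only [← sum_neg_distrib, ← sum_add_distrib, ← sum_sub_distrib]
  refine sum_congr rfl fun v _ => ?_
  rcases (prOf_nonneg hp (fun ω => (X ω, Y ω, Z ω)) v).eq_or_lt with ha | ha
  · simp [← ha]
  have hxz : 0 < prOf p (fun ω => (X ω, Z ω)) (v.1, v.2.2) :=
    ha.trans_le (prOf_le_prOf_comp hp _ (fun v => (v.1, v.2.2)) v)
  have hyz : 0 < prOf p (fun ω => (Y ω, Z ω)) v.2 := ha.trans_le (prOf_le_prOf_comp hp _ Prod.snd v)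
  have hz : 0 < prOf p Z v.2.2 := ha.trans_le (prOf_le_prOf_comp hp _ (fun v => v.2.2) v)
  rw [condIndepMass, logb_div ha.ne' (by positivity), logb_div (by positivity) hz.ne',
    logb_mul hxz.ne' hyz.ne']
  ring

theorem cmi_mul_log_two [Fintype S] [Fintype T] [Fintype U] (hp : ∀ ω, 0 ≤ p ω) :
    cmi p X Y Z * log 2 = ∑ v, condIndepMass p X Y Z v *
      klFun (prOf p (fun ω => (X ω, Y ω, Z ω)) v / condIndepMass p X Y Z v) := by
  set a := prOf p (fun ω => (X ω, Y ω, Z ω))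
  set r := condIndepMass p X Y Z
  have hlog (v) : a v * logb 2 (a v / r v) * log 2 = r v * klFun (a v / r v) + (a v - r v) := by
    rw [mul_assoc, logb, div_mul_cancel₀ _ (log_pos one_lt_two).ne',
      mul_log_div_eq_mul_klFun_add_sub (prOf_eq_zero_of_condIndepMass_eq_zero X Y Z hp)]
  rw [cmi_eq_sum_mul_logb_div X Y Z hp, sum_mul, sum_congr rfl fun v _ => hlog v, sum_add_distrib,
    sum_sub_distrib, sum_condIndepMass, sub_self, add_zero]

theorem cmi_nonneg [Fintype S] [Fintype T] [Fintype U] (hp : ∀ ω, 0 ≤ p ω) : 0 ≤ cmi p X Y Z := by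
  refine nonneg_of_mul_nonneg_left ?_ (log_pos one_lt_two)
  rw [cmi_mul_log_two X Y Z hp]
  exact sum_nonneg fun v _ => mul_nonneg (condIndepMass_nonneg X Y Z hp v)
    (klFun_nonneg (div_nonneg (prOf_nonneg hp _ _) (condIndepMass_nonneg X Y Z hp v)))

theorem cmi_eq_zero_iff [Fintype S] [Fintype T] [Fintype U] (hp : ∀ ω, 0 ≤ p ω) :
    cmi p X Y Z = 0 ↔ prOf p (fun ω => (X ω, Y ω, Z ω)) = condIndepMass p X Y Z := by
  have hr := condIndepMass_nonneg X Y Z hp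
  rw [← mul_left_inj' (log_pos one_lt_two).ne', zero_mul, cmi_mul_log_two X Y Z hp,
    sum_eq_zero_iff_of_nonneg fun v _ =>
      mul_nonneg (hr v) (klFun_nonneg (div_nonneg (prOf_nonneg hp _ _) (hr v))), funext_iff]
  simp only [mem_univ, true_implies, mul_klFun_div_eq_zero_iff (prOf_nonneg hp _ _) (hr _)
    (prOf_eq_zero_of_condIndepMass_eq_zero X Y Z hp)]

theorem cmi_eq_zero_of_prOf_eq_mul [Fintype S] [Fintype T] [Fintype U] (hp : ∀ ω, 0 ≤ p ω)
    (F : S → U → ℝ) (G : T → U → ℝ)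
    (h : ∀ x y z, prOf p (fun ω => (X ω, Y ω, Z ω)) (x, y, z) = F x z * G y z) :
    cmi p X Y Z = 0 := by
  refine (cmi_eq_zero_iff X Y Z hp).2 (funext fun ⟨x, y, z⟩ => ?_)
  have hxz (x : S) : prOf p (fun ω => (X ω, Z ω)) (x, z) = F x z * ∑ y, G y z := by
    simp only [← sum_prOf_mid p X Y Z, mul_sum, h]
  have hyz : prOf p (fun ω => (Y ω, Z ω)) (y, z) = (∑ x, F x z) * G y z := by
    simp only [← sum_prOf_fst p X (fun ω => (Y ω, Z ω)), sum_mul, h]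
  have hz : prOf p Z z = (∑ x, F x z) * ∑ y, G y z := by
    simp only [← sum_prOf_fst p X Z, sum_mul, hxz]
  rw [condIndepMass, h]
  simp only [hxz, hyz, hz]
  rcases eq_or_ne ((∑ x, F x z) * ∑ y, G y z) 0 with h0 | h0
  · have hxyz : prOf p (fun ω => (X ω, Y ω, Z ω)) (x, y, z) = 0 :=
      prOf_eq_zero_of_imp hp (fun ω hω => by simp_all [Prod.ext_iff]) (hz.trans h0)
    rw [← h, hxyz, h0, div_zero]
  · rw [eq_div_iff h0]
    ring

end CondIndep

section CondCopy

variable {Ω β γ S U : Type*} [Fintype Ω] [DecidableEq β] [DecidableEq γ]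
  [DecidableEq S] [DecidableEq U]

def condCopy (p : Ω → ℝ) (B : Ω → β) (C : Ω → γ) (x : Ω × β) : ℝ :=
  p x.1 * (prOf p (fun ω => (B ω, C ω)) (x.2, C x.1) / prOf p C (C x.1))

variable {p : Ω → ℝ} (B : Ω → β) (C : Ω → γ)

theorem condCopy_nonneg (hp : ∀ ω, 0 ≤ p ω) (x : Ω × β) : 0 ≤ condCopy p B C x :=
  mul_nonneg (hp x.1) (div_nonneg (prOf_nonneg hp _ _) (prOf_nonneg hp _ _))

theorem sum_condCopy [Fintype β] (hp : ∀ ω, 0 ≤ p ω) (ω : Ω) :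
    ∑ b, condCopy p B C (ω, b) = p ω := by
  simp only [condCopy, ← mul_sum, ← sum_div, sum_prOf_fst]
  rcases eq_or_ne (prOf p C (C ω)) 0 with h0 | h0
  · rw [h0, div_zero, mul_zero]
    exact (le_antisymm (h0 ▸ le_prOf_apply hp C ω) (hp ω)).symm
  · rw [div_self h0, mul_one]

theorem prOf_condCopy_fst [Fintype β] (hp : ∀ ω, 0 ≤ p ω) (f : Ω → S) :
    prOf (condCopy p B C) (fun x => f x.1) = prOf p f := by
  ext s
  rw [prOf_eq_sum_ite, Fintype.sum_prod_type, prOf_eq_sum_ite]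
  refine sum_congr rfl fun ω _ => ?_
  by_cases h : f ω = s <;> simp [h, sum_condCopy B C hp ω]

theorem prOf_condCopy [Fintype β] {f : Ω → S} {g : Ω → U} (h : U → γ)
    (hC : ∀ ω, C ω = h (g ω)) (s : S) (b : β) (u : U) :
    prOf (condCopy p B C) (fun x => (f x.1, x.2, g x.1)) (s, b, u) =
      prOf p (fun ω => (f ω, g ω)) (s, u) *
        (prOf p (fun ω => (B ω, C ω)) (b, h u) / prOf p C (h u)) := by
  rw [prOf_eq_sum_ite, Fintype.sum_prod_type, prOf_eq_sum_ite, sum_mul]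
  refine sum_congr rfl fun ω _ => ?_
  by_cases hω : f ω = s ∧ g ω = u
  · obtain ⟨rfl, rfl⟩ := hω
    simp [condCopy, hC]
  · rw [if_neg (by simpa only [Prod.mk.injEq] using hω), zero_mul]
    exact sum_eq_zero fun b' _ => if_neg (by simp only [Prod.mk.injEq]; tauto)

theorem cmi_condCopy_eq_zero [Fintype β] [Fintype S] [Fintype U] (hp : ∀ ω, 0 ≤ p ω)
    (f : Ω → S) (g : Ω → U) (h : U → γ) (hC : ∀ ω, C ω = h (g ω)) :
    cmi (condCopy p B C) (fun x => f x.1) (fun x => x.2) (fun x => g x.1) = 0 :=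
  cmi_eq_zero_of_prOf_eq_mul _ _ _ (condCopy_nonneg B C hp)
    (fun s u => prOf p (fun ω => (f ω, g ω)) (s, u))
    (fun b u => prOf p (fun ω => (B ω, C ω)) (b, h u) / prOf p C (h u)) (prOf_condCopy B C h hC)

theorem prOf_condCopy_eq_of_cmi_eq_zero [Fintype β] [Fintype γ] [Fintype S]
    (hp : ∀ ω, 0 ≤ p ω) {f : Ω → S} (hf : cmi p f B C = 0) :
    prOf (condCopy p B C) (fun x => (f x.1, x.2, C x.1)) = prOf p (fun ω => (f ω, B ω, C ω)) := by
  rw [(cmi_eq_zero_iff f B C hp).1 hf]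
  funext ⟨s, b, c⟩
  rw [prOf_condCopy B C id (fun _ => rfl), condIndepMass, mul_div_assoc]
  rfl

end CondCopy

section Shannon

variable {Ω α β γ δ : Type*} [Fintype Ω] [Fintype α] [Fintype β] [Fintype γ] [Fintype δ]
  [DecidableEq α] [DecidableEq β] [DecidableEq γ] [DecidableEq δ]

theorem cmi_add_cmi_add_mi_add_cmi_eq (p : Ω → ℝ) (A : Ω → α) (B : Ω → β) (C : Ω → γ)
    (D : Ω → δ) :
    cmi p C D A + cmi p C D B + mi p A B + cmi p D B (fun ω => (C ω, A ω)) =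
      mi p C D + cmi p A B D + cmi p C D (fun ω => (A ω, B ω)) + cmi p D B C := by
  have e₁ := ent_prod_comm p C D
  have e₂ := ent_prod_comm p A D
  have e₃ := ent_prod_comm p B C
  have e₄ := ent_prod_comm p B D
  have e₅ : ent p (fun ω => (C ω, D ω, A ω)) = ent p (fun ω => (D ω, C ω, A ω)) :=
    ent_eq_ent_comp p _ (fun v : γ × δ × α => (v.2.1, v.1, v.2.2)) fun w => (w.2.1, w.1, w.2.2)
  have e₆ : ent p (fun ω => (C ω, D ω, B ω)) = ent p (fun ω => (D ω, B ω, C ω)) :=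
    ent_eq_ent_comp p _ (fun v : γ × δ × β => (v.2.1, v.2.2, v.1)) fun w => (w.2.2, w.1, w.2.1)
  have e₇ : ent p (fun ω => (C ω, A ω, B ω)) = ent p (fun ω => (B ω, C ω, A ω)) :=
    ent_eq_ent_comp p _ (fun v : γ × α × β => (v.2.2, v.1, v.2.1)) fun w => (w.2.1, w.2.2, w.1)
  have e₈ : ent p (fun ω => (A ω, B ω, D ω)) = ent p (fun ω => (D ω, A ω, B ω)) :=
    ent_eq_ent_comp p _ (fun v : α × β × δ => (v.2.2, v.1, v.2.1)) fun w => (w.2.1, w.2.2, w.1)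
  have e₉ : ent p (fun ω => (C ω, D ω, A ω, B ω)) = ent p (fun ω => (D ω, B ω, C ω, A ω)) :=
    ent_eq_ent_comp p _ (fun v : γ × δ × α × β => (v.2.1, v.2.2.2, v.1, v.2.2.1))
      fun w => (w.2.2.1, w.1, w.2.2.2, w.2.1)
  simp only [mi, cmi]
  linarith

theorem mi_le_cmi_add_cmi_add_mi_of_cmi_eq_zero {p : Ω → ℝ} (hp : ∀ ω, 0 ≤ p ω) (A : Ω → α)
    (B : Ω → β) (C : Ω → γ) (D : Ω → δ) (hC : cmi p D B C = 0)
    (hCA : cmi p D B (fun ω => (C ω, A ω)) = 0) :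
    mi p C D ≤ cmi p C D A + cmi p C D B + mi p A B := by
  have := cmi_add_cmi_add_mi_add_cmi_eq p A B C D
  linarith [cmi_nonneg A B D hp, cmi_nonneg C D (fun ω => (A ω, B ω)) hp]

end Shannon

theorem matus_conditional_inequality {Ω α β γ δ : Type*} [Fintype Ω] [Fintype α] [Fintype β] [Fintype γ] [Fintype δ]
    [DecidableEq α] [DecidableEq β] [DecidableEq γ] [DecidableEq δ]
    (p : Ω → ℝ) (hp : IsPMF p)
    (A : Ω → α) (B : Ω → β) (C : Ω → γ) (D : Ω → δ)
    (h1 : cmi p A B C = 0) (h2 : cmi p B D C = 0) :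
    mi p C D ≤ cmi p C D A + cmi p C D B + mi p A B := by
  have key := mi_le_cmi_add_cmi_add_mi_of_cmi_eq_zero (condCopy_nonneg B C hp.1)
    (fun x => A x.1) (fun x => x.2) (fun x => C x.1) (fun x => D x.1)
    (cmi_condCopy_eq_zero B C hp.1 D C id fun _ => rfl)
    (cmi_condCopy_eq_zero B C hp.1 D (fun ω => (C ω, A ω)) Prod.fst fun _ => rfl)
  have hCD : prOf (condCopy p B C) (fun x => (C x.1, D x.1)) = prOf p (fun ω => (C ω, D ω)) :=
    prOf_condCopy_fst B C hp.1 fun ω => (C ω, D ω)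
  have hCDA : prOf (condCopy p B C) (fun x => (C x.1, D x.1, A x.1)) =
      prOf p (fun ω => (C ω, D ω, A ω)) :=
    prOf_condCopy_fst B C hp.1 fun ω => (C ω, D ω, A ω)
  have hCDB : prOf (condCopy p B C) (fun x => (C x.1, D x.1, x.2)) =
      prOf p (fun ω => (C ω, D ω, B ω)) :=
    prOf_comp_congr (prOf_condCopy_eq_of_cmi_eq_zero B C hp.1 ((cmi_comm p B D C).symm.trans h2))
      fun v => (v.2.2, v.1, v.2.1)
  have hAB : prOf (condCopy p B C) (fun x => (A x.1, x.2)) = prOf p (fun ω => (A ω, B ω)) :=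
    prOf_comp_congr (prOf_condCopy_eq_of_cmi_eq_zero B C hp.1 h1) fun v => (v.1, v.2.1)
  rwa [mi_eq_of_prOf_eq hCD, cmi_eq_of_prOf_eq hCDA, cmi_eq_of_prOf_eq hCDB,
    mi_eq_of_prOf_eq hAB] at key
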